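/- arXiv:1407.3144 — 6 statements merged into one kernel-verified Lean document; each statement's English description precedes it below -/
import Mathlib

section
/- Let G be a connected undirected graph with diameter Δ and doubling dimension b > 0, and let τ ≥ 1 be an integer. Then the vertex set of G can be partitioned into at most τ connected clusters, each of radius O(⌈Δ/τ^(1/b)⌉) around some center node (i.e., every node in a cluster is within graph distance O(⌈Δ/τ^(1/b)⌉) of the cluster's center). -/
open Finset SimpleGraph

section Voronoi

variable {V : Type} [Fintype V] [DecidableEq V] (G : SimpleGraph V)

/-- Voronoi partition lemma: given a set `S` of centers covering `V` within radius `R`,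
there is a partition into at most `S.card` connected clusters of radius `R`. -/
lemma voronoi_partition (hconn : G.Connected) (S : Finset V) (R : ℕ)
    (hcov : ∀ u : V, ∃ s ∈ S, G.dist s u ≤ R) :
    ∃ P : Finpartition (Finset.univ : Finset V), P.parts.card ≤ S.card ∧
      ∀ p ∈ P.parts, (G.induce (p : Set V)).Connected ∧
        ∃ ctr ∈ p, ∀ v ∈ p, G.dist ctr v ≤ R := by
  haveI : Nonempty V := hconn.nonempty
  set n := Fintype.card V with hn
  have hn1 : 1 ≤ n := Fintype.card_pos
  set e := Fintype.equivFin V with he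
  -- key function for argmin with lexicographic tie-breaking
  set key : V → V → ℕ := fun v s => G.dist s v * n + (e s : ℕ) with hkey
  have helt : ∀ s : V, (e s : ℕ) < n := fun s => (e s).2
  have hkeyinj : ∀ v s s', key v s = key v s' → s = s' := by
    intro v s s' h
    have h1 : (key v s) % n = (e s : ℕ) := by
      simp only [hkey]
      rw [Nat.add_comm, Nat.add_mul_mod_self_right]
      exact Nat.mod_eq_of_lt (helt s)
    have h2 : (key v s') % n = (e s' : ℕ) := by
      simp only [hkey]
      rw [Nat.add_comm, Nat.add_mul_mod_self_right]
      exact Nat.mod_eq_of_lt (helt s')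
    have : (e s : ℕ) = (e s' : ℕ) := by rw [← h1, ← h2, h]
    exact e.injective (Fin.ext this)
  have hSne : S.Nonempty := by
    obtain ⟨s, hs, _⟩ := hcov (Classical.arbitrary V)
    exact ⟨s, hs⟩
  have hf : ∀ v : V, ∃ s ∈ S, ∀ s' ∈ S, key v s ≤ key v s' :=
    fun v => S.exists_min_image (key v) hSne
  choose f hfS hfmin using hf
  -- f is the identity on centers
  have hfix : ∀ s ∈ S, f s = s := by
    intro s hs
    have h1 : key s (f s) ≤ key s s := hfmin s s hs
    have h2 : key s s = (e s : ℕ) := by simp [hkey, SimpleGraph.dist_self]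
    have h3 : G.dist (f s) s * n + (e (f s) : ℕ) ≤ (e s : ℕ) := by
      rw [← h2]; exact h1
    have h4 : G.dist (f s) s = 0 := by
      by_contra h
      have : 1 ≤ G.dist (f s) s := Nat.one_le_iff_ne_zero.mpr h
      have : n ≤ G.dist (f s) s * n := le_mul_of_one_le_left (Nat.zero_le _) this
      omega
    exact (hconn.dist_eq_zero_iff).mp h4
  -- radius bound
  have hrad : ∀ v : V, G.dist (f v) v ≤ R := by
    intro v
    obtain ⟨s, hs, hds⟩ := hcov v
    have h1 : key v (f v) ≤ key v s := hfmin v s hs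
    have h2 : key v s ≤ R * n + (e s : ℕ) :=
      Nat.add_le_add_right (Nat.mul_le_mul_right n hds) _
    by_contra h
    have h3 : R + 1 ≤ G.dist (f v) v := by omega
    have h4 : (R + 1) * n ≤ G.dist (f v) v * n := Nat.mul_le_mul_right n h3
    have h5 : G.dist (f v) v * n ≤ key v (f v) := Nat.le_add_right _ _
    have h6 : (R + 1) * n = R * n + n := by ring
    have := helt s
    omega
  -- neighbor claim: walking along a shortest path towards the assigned center stays in the cell
  have hnbr : ∀ v u : V, G.Adj u v → G.dist (f v) u + 1 = G.dist (f v) v → f u = f v := by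
    intro v u hadj hd
    have hmin : ∀ s' ∈ S, key u (f v) ≤ key u s' := by
      intro s' hs'
      have hv : key v (f v) ≤ key v s' := hfmin v s' hs'
      have htri : G.dist s' v ≤ G.dist s' u + 1 := by
        have h1 := hconn.dist_triangle (u := s') (v := u) (w := v)
        have h2 : G.dist u v = 1 := (SimpleGraph.dist_eq_one_iff_adj).mpr hadj
        omega
      -- key v (f v) = (d+1)*n + e (f v) where d = dist (f v) u
      have hkv : key v (f v) = (G.dist (f v) u + 1) * n + (e (f v) : ℕ) := by
        simp only [hkey, hd]
      have hDpos : 1 ≤ G.dist s' v := by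
        by_contra h
        have h0 : G.dist s' v = 0 := by omega
        have hkvs : key v s' = (e s' : ℕ) := by simp [hkey, h0]
        have h6 : n ≤ (G.dist (f v) u + 1) * n :=
          le_mul_of_one_le_left (Nat.zero_le _) (by omega)
        have h7 := helt s'
        omega
      -- now linear arithmetic (with products as atoms)
      have e1 : G.dist s' v * n ≤ G.dist s' u * n + n := by
        calc G.dist s' v * n ≤ (G.dist s' u + 1) * n := Nat.mul_le_mul_right n htri
        _ = G.dist s' u * n + n := by ring
      have e2 : (G.dist (f v) u + 1) * n = G.dist (f v) u * n + n := by ring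
      have e3 : (G.dist (f v) u + 1) * n + (e (f v) : ℕ) ≤ G.dist s' v * n + (e s' : ℕ) := by
        rw [← hkv]; exact hv
      simp only [hkey]
      omega
    have h1 : key u (f u) ≤ key u (f v) := hfmin u (f v) (hfS v)
    have h2 : key u (f v) ≤ key u (f u) := hmin (f u) (hfS u)
    exact hkeyinj u (f u) (f v) (le_antisymm h1 h2)
  -- the partition by fibers of f
  set std : Setoid V := ⟨fun a b => f a = f b,
    ⟨fun _ => rfl, fun h => h.symm, fun h1 h2 => h1.trans h2⟩⟩ with hstd
  haveI : DecidableRel std.r := fun a b => by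
    change Decidable (f a = f b); infer_instance
  refine ⟨Finpartition.ofSetoid std, ?_, ?_⟩
  · -- card bound
    set P := Finpartition.ofSetoid std with hP
    have hrep : ∀ p ∈ P.parts, ∃ a ∈ p, ∀ b, b ∈ p ↔ f a = f b := by
      intro p hp
      obtain ⟨a, ha⟩ := P.nonempty_of_mem_parts hp
      refine ⟨a, ha, fun b => ?_⟩
      have hpa : P.part a = p := P.part_eq_of_mem hp ha
      rw [← hpa]
      exact Finpartition.mem_part_ofSetoid_iff_rel
    choose rep hrepmem hrepiff using hrep
    have : P.parts.card ≤ S.card := by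
      apply Finset.card_le_card_of_injOn
        (fun p => if hp : p ∈ P.parts then f (rep p hp) else Classical.arbitrary V)
      · intro p hp
        simp only [mem_coe] at hp
        simp only [hp, dif_pos]
        exact hfS _
      · intro p hp q hq hpq
        simp only [mem_coe] at hp hq
        simp only [hp, hq, dif_pos] at hpq
        have : rep q hq ∈ p := (hrepiff p hp (rep q hq)).mpr hpq
        exact P.eq_of_mem_parts hp hq this (hrepmem q hq)
    exact this
  · -- each part: connected and has a center
    intro p hp
    set P := Finpartition.ofSetoid std with hP
    obtain ⟨a, ha⟩ := P.nonempty_of_mem_parts hp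
    have hmem : ∀ b, b ∈ p ↔ f a = f b := by
      intro b
      have hpa : P.part a = p := P.part_eq_of_mem hp ha
      rw [← hpa]
      exact Finpartition.mem_part_ofSetoid_iff_rel
    set s0 := f a with hs0
    have hs0S : s0 ∈ S := hfS a
    have hs0p : s0 ∈ p := (hmem s0).mpr (hfix s0 hs0S).symm
    -- reachability to the center within the part
    have hreach : ∀ d : ℕ, ∀ v : V, ∀ hv : v ∈ p, G.dist s0 v = d →
        (G.induce (p : Set V)).Reachable ⟨v, by simpa using hv⟩ ⟨s0, by simpa using hs0p⟩ := by
      intro d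
      induction d using Nat.strong_induction_on with
      | _ d ih =>
        intro v hv hdist
        rcases Nat.eq_zero_or_pos d with h0 | hpos
        · subst h0
          have : s0 = v := hconn.dist_eq_zero_iff.mp hdist
          subst this
          exact Reachable.refl _
        · -- get a shortest walk and step along it
          have hfv : f v = s0 := ((hmem v).mp hv).symm
          obtain ⟨d', rfl⟩ : ∃ d', d = d' + 1 := ⟨d - 1, by omega⟩
          obtain ⟨w, hw⟩ := (hconn v s0).exists_walk_length_eq_dist
          have hwlen : w.length = d' + 1 := by
            rw [hw, SimpleGraph.dist_comm, hdist]
          have hnnil : ¬ w.Nil := by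
            intro hnil
            rw [SimpleGraph.Walk.nil_iff_length_eq] at hnil
            omega
          set u := w.getVert 1 with hu
          have hadj : G.Adj v u := SimpleGraph.Walk.adj_snd hnnil
          have htlen : w.tail.length = d' := by
            have := SimpleGraph.Walk.length_tail_add_one hnnil
            omega
          have hdu_le : G.dist s0 u ≤ d' := by
            have := SimpleGraph.dist_le w.tail
            rw [htlen] at this
            rw [SimpleGraph.dist_comm]
            exact this
          have hdu_ge : d' ≤ G.dist s0 u := by
            have h1 := hconn.dist_triangle (u := s0) (v := u) (w := v)
            have h2 : G.dist u v = 1 := (SimpleGraph.dist_eq_one_iff_adj).mpr hadj.symm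
            omega
          have hdu : G.dist s0 u = d' := le_antisymm hdu_le hdu_ge
          have hfu : f u = f v := by
            apply hnbr v u hadj.symm
            rw [hfv, hdu, hdist]
          have hup : u ∈ p := (hmem u).mpr (by rw [hfu, hfv])
          have hstep : (G.induce (p : Set V)).Adj ⟨v, by simpa using hv⟩ ⟨u, by simpa using hup⟩ := by
            simp only [comap_adj, Function.Embedding.coe_subtype]
            exact hadj
          exact (hstep.reachable).trans (ih d' (by omega) u hup hdu)
    constructor
    · haveI : Nonempty (p : Set V) := ⟨⟨s0, by simpa using hs0p⟩⟩
      refine SimpleGraph.Connected.mk ?_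
      intro x y
      obtain ⟨x, hx⟩ := x
      obtain ⟨y, hy⟩ := y
      have h1 := hreach (G.dist s0 x) x (by simpa using hx) rfl
      have h2 := hreach (G.dist s0 y) y (by simpa using hy) rfl
      exact h1.trans h2.symm
    · exact ⟨s0, hs0p, fun v hv => by
        have : f v = s0 := ((hmem v).mp hv).symm
        rw [← this]; exact hrad v⟩

end Voronoi



/-- Iterated halving radius. -/
def radSeq (Δ : ℕ) : ℕ → ℕ
  | 0 => Δ
  | k + 1 => (radSeq Δ k + 1) / 2

lemma radSeq_zero_of (k : ℕ) : radSeq 0 k = 0 := by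
  induction k with
  | zero => rfl
  | succ k ih => simp [radSeq, ih]

lemma radSeq_le_real (Δ k : ℕ) : (radSeq Δ k : ℝ) ≤ (Δ : ℝ) / 2 ^ k + 1 := by
  induction k with
  | zero => simp [radSeq]
  | succ k ih =>
    have h1 : ((radSeq Δ (k+1) : ℕ) : ℝ) ≤ ((radSeq Δ k : ℕ) + 1 : ℝ) / 2 := by
      have h2 : (radSeq Δ (k+1)) * 2 ≤ radSeq Δ k + 1 := by
        show ((radSeq Δ k + 1) / 2) * 2 ≤ radSeq Δ k + 1
        omega
      have := (Nat.cast_le (α := ℝ)).mpr h2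
      push_cast at this
      linarith
    have h3 : ((radSeq Δ k : ℕ) + 1 : ℝ) / 2 ≤ ((Δ : ℝ) / 2 ^ k + 1 + 1) / 2 := by
      linarith
    have h4 : ((Δ : ℝ) / 2 ^ k + 1 + 1) / 2 = (Δ : ℝ) / 2 ^ (k + 1) + 1 := by
      rw [pow_succ]; ring
    linarith [h1, h3, h4.le]

lemma cover_iter {V : Type} [Fintype V] [DecidableEq V] (G : SimpleGraph V)
    (b Δ : ℕ)
    (hDub : ∀ (R : ℕ), 0 < R → ∀ v : V, ∃ S : Finset V, S.card ≤ 2 ^ b ∧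
      ∀ u : V, G.dist v u ≤ 2 * R → ∃ s ∈ S, G.dist s u ≤ R)
    (v0 : V) (hv0 : ∀ u, G.dist v0 u ≤ Δ) :
    ∀ k, ∃ S : Finset V, S.card ≤ 2 ^ (k * b) ∧
      ∀ u, ∃ s ∈ S, G.dist s u ≤ radSeq Δ k := by
  intro k
  induction k with
  | zero => exact ⟨{v0}, by simp, fun u => ⟨v0, by simp, hv0 u⟩⟩
  | succ k ih =>
    obtain ⟨S, hcard, hcov⟩ := ih
    by_cases hr0 : radSeq Δ k = 0
    · refine ⟨S, le_trans hcard ?_, fun u => ?_⟩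
      · exact Nat.pow_le_pow_right (by norm_num) (Nat.mul_le_mul_right b (Nat.le_succ k))
      · obtain ⟨s, hs, hd⟩ := hcov u
        refine ⟨s, hs, le_trans hd ?_⟩
        rw [hr0]
        exact Nat.zero_le _
    · set R := (radSeq Δ k + 1) / 2 with hR
      have hRpos : 0 < R := by omega
      choose T hT1 hT2 using hDub R hRpos
      refine ⟨S.biUnion T, ?_, ?_⟩
      · calc (S.biUnion T).card ≤ S.card * 2 ^ b :=
              Finset.card_biUnion_le_card_mul _ _ _ (fun s _ => hT1 s)
          _ ≤ 2 ^ (k * b) * 2 ^ b := Nat.mul_le_mul_right _ hcard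
          _ = 2 ^ ((k + 1) * b) := by rw [← pow_add, Nat.succ_mul]
      · intro u
        obtain ⟨s, hs, hd⟩ := hcov u
        have hd2 : G.dist s u ≤ 2 * R := by omega
        obtain ⟨t, ht, htd⟩ := hT2 s u hd2
        exact ⟨t, Finset.mem_biUnion.mpr ⟨s, hs, ht⟩, htd⟩



/-- A connected graph with doubling dimension `b > 0` and diameter `Δ` can be
partitioned into at most `τ` connected clusters, each of radius `O(⌈Δ/τ^(1/b)⌉)` around a
center. -/
theorem stmt0 :
    ∃ c : ℕ, 0 < c ∧ ∀ (V : Type) (_ : Fintype V) (_ : DecidableEq V) (G : SimpleGraph V)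
      (b τ Δ : ℕ), G.Connected → 0 < b → 1 ≤ τ →
      (IsGreatest {d : ℕ | ∃ u v : V, G.dist u v = d} Δ) →
      -- doubling dimension b: every ball of radius 2R is covered by at most 2^b balls of radius R
      (∀ (R : ℕ), 0 < R → ∀ v : V, ∃ S : Finset V, S.card ≤ 2 ^ b ∧
        ∀ u : V, G.dist v u ≤ 2 * R → ∃ s ∈ S, G.dist s u ≤ R) →
      ∃ P : Finpartition (Finset.univ : Finset V),
        P.parts.card ≤ τ ∧
        ∀ p ∈ P.parts, (G.induce (p : Set V)).Connected ∧
          ∃ ctr ∈ p, ∀ v ∈ p, G.dist ctr v ≤ c * ⌈(Δ : ℝ) / (τ : ℝ) ^ ((1 : ℝ) / b)⌉₊ := by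
  refine ⟨5, by norm_num, ?_⟩
  intro V _ _ G b τ Δ hconn hb hτ hΔ hDub
  haveI : Nonempty V := hconn.nonempty
  obtain ⟨v0⟩ := ‹Nonempty V›
  have hv0 : ∀ u, G.dist v0 u ≤ Δ := fun u => hΔ.2 ⟨v0, u, rfl⟩
  set L := Nat.log 2 τ with hL
  set k := L / b with hk
  obtain ⟨S, hcard, hcov⟩ := cover_iter G b Δ hDub v0 hv0 k
  set B := ⌈(Δ : ℝ) / (τ : ℝ) ^ ((1 : ℝ) / b)⌉₊ with hB
  -- S.card ≤ τ
  have hSτ : S.card ≤ τ := by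
    calc S.card ≤ 2 ^ (k * b) := hcard
      _ ≤ 2 ^ L := Nat.pow_le_pow_right (by norm_num) (by rw [hk]; exact Nat.div_mul_le_self L b)
      _ ≤ τ := Nat.pow_log_le_self 2 (by omega)
  -- radius bound
  have hradB : radSeq Δ k ≤ 5 * B := by
    by_cases hΔ0 : Δ = 0
    · rw [hΔ0, radSeq_zero_of]; exact Nat.zero_le _
    · have hΔpos : 0 < Δ := by omega
      set t : ℝ := (τ : ℝ) ^ ((1 : ℝ) / b) with ht
      have htpos : 0 < t := Real.rpow_pos_of_pos (by exact_mod_cast hτ) _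
      have hB1 : 1 ≤ B := by
        rw [hB]
        exact Nat.one_le_iff_ne_zero.mpr (Nat.ceil_pos.mpr
          (div_pos (by exact_mod_cast hΔpos) htpos)).ne'
      have hBge : (Δ : ℝ) / t ≤ B := Nat.le_ceil _
      -- t ≤ 4 * 2^k
      have ht4 : t ≤ 4 * 2 ^ k := by
        have hτle : (τ : ℝ) ≤ (2 : ℝ) ^ (L + 1) := by
          have := Nat.lt_pow_succ_log_self (by norm_num : 1 < 2) τ
          exact_mod_cast this.le
        have hexp : ((L : ℝ) + 1) / b ≤ (k : ℝ) + 1 := by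
          have h1 : L % b < b := Nat.mod_lt _ hb
          have h2 := Nat.div_add_mod L b
          have hnat : L + 1 ≤ (k + 1) * b := by
            have h3 : (k + 1) * b = b * (L / b) + b := by rw [hk]; ring
            rw [h3]; omega
          rw [div_le_iff₀ (by exact_mod_cast hb : (0:ℝ) < b)]
          have := (Nat.cast_le (α := ℝ)).mpr hnat
          push_cast at this
          linarith
        calc t ≤ ((2 : ℝ) ^ (L + 1)) ^ ((1 : ℝ) / b) := by
              rw [ht]
              exact Real.rpow_le_rpow (by positivity) hτle (by positivity)
          _ = (2 : ℝ) ^ (((L : ℝ) + 1) * (1 / b)) := by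
              rw [← Real.rpow_natCast 2 (L + 1), ← Real.rpow_mul (by norm_num)]
              push_cast
              ring_nf
          _ = (2 : ℝ) ^ (((L : ℝ) + 1) / b) := by rw [mul_one_div]
          _ ≤ (2 : ℝ) ^ ((k : ℝ) + 1) := Real.rpow_le_rpow_of_exponent_le (by norm_num) hexp
          _ = 2 * 2 ^ k := by
              rw [show ((k : ℝ) + 1) = ((k + 1 : ℕ) : ℝ) by push_cast; ring,
                Real.rpow_natCast, pow_succ]
              ring
          _ ≤ 4 * 2 ^ k := by
              have : (0:ℝ) ≤ 2 ^ k := by positivity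
              linarith
      -- conclude over ℝ
      have hreal : (radSeq Δ k : ℝ) ≤ 5 * B := by
        have h1 := radSeq_le_real Δ k
        have h2 : (Δ : ℝ) / 2 ^ k ≤ 4 * ((Δ : ℝ) / t) := by
          rw [mul_div_assoc']
          rw [div_le_div_iff₀ (by positivity) htpos]
          have hΔ0' : (0:ℝ) ≤ (Δ : ℝ) := by positivity
          nlinarith [mul_le_mul_of_nonneg_left ht4 hΔ0']
        have h3 : (1 : ℝ) ≤ B := by exact_mod_cast hB1
        calc (radSeq Δ k : ℝ) ≤ (Δ : ℝ) / 2 ^ k + 1 := h1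
          _ ≤ 4 * ((Δ : ℝ) / t) + 1 := by linarith
          _ ≤ 4 * B + B := by nlinarith [hBge]
          _ = 5 * B := by ring
      exact_mod_cast hreal
  have hcov' : ∀ u, ∃ s ∈ S, G.dist s u ≤ 5 * B := by
    intro u
    obtain ⟨s, hs, hd⟩ := hcov u
    exact ⟨s, hs, hd.trans hradB⟩
  obtain ⟨P, hPcard, hPparts⟩ := voronoi_partition G hconn S (5 * B) hcov'
  exact ⟨P, hPcard.trans hSτ, hPparts⟩
end

section
/- Let T be a spanning tree on k nodes. Then, whenever τ ≥ k/log² k, T can be decomposed into τ subtrees, each of height O(log² k). -/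
open SimpleGraph Finset

namespace StmtSixAux

variable {V : Type} [DecidableEq V]

/-- Walks whose support lies in `s` give reachability in the induced graph. -/
lemma reach_induce (T : SimpleGraph V) {s : Set V} :
    ∀ {a b : V} (w : T.Walk a b), (∀ x ∈ w.support, x ∈ s) →
      ∀ (ha : a ∈ s) (hb : b ∈ s), (T.induce s).Reachable ⟨a, ha⟩ ⟨b, hb⟩ := by
  intro a b w
  induction w with
  | nil => intro _ ha hb; exact Reachable.refl _
  | @cons a' c' b' h p ih =>
    intro hs ha hb
    have hc : c' ∈ s := hs c' (by simp)
    have hadj : (T.induce s).Adj ⟨a', ha⟩ ⟨c', hc⟩ := h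
    exact hadj.reachable.trans (ih (fun x hx => hs x (by simp [hx])) hc hb)

/-- A set with a "center" joined to all its points by walks inside the set induces a
connected subgraph. -/
lemma connected_induce_of_center (T : SimpleGraph V) (s : Set V) (u : V) (hu : u ∈ s)
    (h : ∀ x ∈ s, ∃ w : T.Walk u x, ∀ y ∈ w.support, y ∈ s) :
    (T.induce s).Connected := by
  haveI : Nonempty s := ⟨⟨u, hu⟩⟩
  refine ⟨fun x y => ?_⟩
  obtain ⟨wx, hwx⟩ := h x x.2
  obtain ⟨wy, hwy⟩ := h y y.2
  have rx := reach_induce T wx hwx hu x.2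
  have ry := reach_induce T wy hwy hu y.2
  exact rx.symm.trans ry

/-- Splitting a geodesic walk at a support vertex. -/
lemma dist_split (T : SimpleGraph V) (hc : T.Connected) {a b x : V} (w : T.Walk a b)
    (hw : w.length = T.dist a b) (hx : x ∈ w.support) :
    T.dist a x + T.dist x b = T.dist a b := by
  have h1 : T.dist a x ≤ (w.takeUntil x hx).length := SimpleGraph.dist_le _
  have h2 : T.dist x b ≤ (w.dropUntil x hx).length := SimpleGraph.dist_le _
  have h3 : (w.takeUntil x hx).length + (w.dropUntil x hx).length = w.length := by
    rw [← Walk.length_append, Walk.take_spec]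
  have h4 := hc.dist_triangle (u := a) (v := x) (w := b)
  omega

/-- On a geodesic walk there is a vertex at any prescribed distance from the start. -/
lemma exists_on_geo (T : SimpleGraph V) (hc : T.Connected) :
    ∀ {a b : V} (w : T.Walk a b), w.length = T.dist a b →
      ∀ i, i ≤ w.length → ∃ x ∈ w.support, T.dist a x = i ∧ T.dist x b = w.length - i := by
  intro a b w
  induction w with
  | @nil a' =>
    intro _ i hi
    have : i = 0 := Nat.le_zero.mp hi
    subst this
    exact ⟨a', by simp, by simp [SimpleGraph.dist_self], by simp⟩
  | @cons a' c' b' h p ih =>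
    intro hw i hi
    have hlen : (Walk.cons h p).length = p.length + 1 := by simp
    have hac : T.dist a' c' ≤ 1 := by
      have := SimpleGraph.dist_le (Walk.cons h (Walk.nil : T.Walk c' c'))
      simpa using this
    have hcb : T.dist c' b' = p.length := by
      have h1 : T.dist c' b' ≤ p.length := SimpleGraph.dist_le p
      have h2 := hc.dist_triangle (u := a') (v := c') (w := b')
      omega
    rcases Nat.eq_zero_or_pos i with hi0 | hip
    · subst hi0
      exact ⟨a', by simp, by simp [SimpleGraph.dist_self], by omega⟩
    · have hi' : i - 1 ≤ p.length := by
        rw [hlen] at hi; omega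
      obtain ⟨x, hxs, hx1, hx2⟩ := ih (by omega) (i - 1) hi'
      refine ⟨x, by simp [hxs], ?_, ?_⟩
      · have t1 := hc.dist_triangle (u := a') (v := c') (w := x)
        have t2 := hc.dist_triangle (u := a') (v := x) (w := b')
        omega
      · omega

/-- In a tree, two vertices in a connected induced subset are joined by a geodesic path
staying inside the subset. -/
lemma geo_in (T : SimpleGraph V) (hT : T.IsTree) {A : Set V} (hA : (T.induce A).Connected)
    {a b : V} (ha : a ∈ A) (hb : b ∈ A) :
    ∃ w : T.Walk a b, w.IsPath ∧ w.length = T.dist a b ∧ ∀ x ∈ w.support, x ∈ A := by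
  obtain ⟨w₀⟩ := hA.preconnected ⟨a, ha⟩ ⟨b, hb⟩
  let f : T.induce A →g T := ⟨Subtype.val, fun {u v} h => h⟩
  let w₁ : T.Walk a b := w₀.map f
  have hsupp : ∀ x ∈ w₁.support, x ∈ A := by
    intro x hx
    rw [Walk.support_map] at hx
    obtain ⟨y, _, rfl⟩ := List.mem_map.mp hx
    exact y.2
  obtain ⟨q, hq, hql⟩ := hT.isConnected.exists_path_of_dist a b
  obtain ⟨q₀, _, huniq⟩ := hT.existsUnique_path a b
  have hbp : w₁.bypass = q := by
    rw [huniq _ w₁.bypass_isPath, huniq _ hq]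
  exact ⟨w₁.bypass, w₁.bypass_isPath, by rw [hbp, hql],
    fun x hx => hsupp x (w₁.support_bypass_subset hx)⟩

/-- Main decomposition lemma: any connected induced subset of a tree can be partitioned
into connected pieces of radius at most `H`, all but (at most) one of which have at least
`H+1` vertices. -/
lemma decomp [Fintype V] [DecidableEq V] (T : SimpleGraph V) (hT : T.IsTree) (H : ℕ) :
    ∀ (n : ℕ) (A : Finset V), A.card ≤ n → A.Nonempty → (T.induce (A : Set V)).Connected →
    ∃ Ps : Finset (Finset V),
      Ps.sup id = A ∧ (Ps : Set (Finset V)).PairwiseDisjoint id ∧ (⊥ : Finset V) ∉ Ps ∧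
      (Ps.card - 1) * (H + 1) < A.card ∧
      ∀ p ∈ Ps, (T.induce (p : Set V)).Connected ∧ ∃ r ∈ p, ∀ v ∈ p, T.dist r v ≤ H := by
  intro n
  induction n with
  | zero =>
    intro A hA hne _
    exact absurd (Finset.card_eq_zero.mp (Nat.le_zero.mp hA)) hne.ne_empty
  | succ n IH =>
    intro A hAn hne hconn
    obtain ⟨r, hr⟩ := hne
    obtain ⟨v, hv, hvmax⟩ := A.exists_max_image (T.dist r) ⟨r, hr⟩
    by_cases hD : T.dist r v ≤ H
    · refine ⟨{A}, Finset.sup_singleton, ?_, ?_, ?_, ?_⟩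
      · rw [Finset.coe_singleton]
        exact Set.pairwiseDisjoint_singleton _ _
      · simp only [Finset.mem_singleton]
        intro hbot
        rw [← hbot] at hr
        simp at hr
      · simpa using Finset.card_pos.mpr ⟨r, hr⟩
      · intro p hp
        rw [Finset.mem_singleton] at hp; subst hp
        exact ⟨hconn, r, hr, fun x hx => le_trans (hvmax x hx) hD⟩
    · push_neg at hD
      obtain ⟨w, hwp, hwl, hwA⟩ := geo_in T hT hconn hr hv
      obtain ⟨u, huw, hru, huv⟩ := exists_on_geo T hT.isConnected w hwl
        (T.dist r v - H) (by omega)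
      have huA : u ∈ A := hwA u huw
      set S := A.filter (fun x => T.dist r x = (T.dist r v - H) + T.dist u x) with hSdef
      have hSsub : S ⊆ A := Finset.filter_subset _ _
      have hmemS : ∀ x, x ∈ S ↔ (x ∈ A ∧ T.dist r x = (T.dist r v - H) + T.dist u x) :=
        fun x => Finset.mem_filter
      have huS : u ∈ S := (hmemS u).mpr ⟨huA, by rw [SimpleGraph.dist_self]; omega⟩
      have hrad : ∀ x ∈ S, T.dist u x ≤ H := by
        intro x hx
        obtain ⟨hxA, hxd⟩ := (hmemS x).mp hx
        have := hvmax x hxA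
        omega
      have hkey : ∀ x ∈ S, ∃ g : T.Walk u x, g.IsPath ∧ g.length = T.dist u x ∧
          ∀ y ∈ g.support, y ∈ S := by
        intro x hx
        obtain ⟨hxA, hxd⟩ := (hmemS x).mp hx
        obtain ⟨g, hgp, hgl, hgA⟩ := geo_in T hT hconn huA hxA
        refine ⟨g, hgp, hgl, fun y hy => ?_⟩
        have hsplit := dist_split T hT.isConnected g hgl hy
        have t1 := hT.isConnected.dist_triangle (u := r) (v := u) (w := y)
        have t2 := hT.isConnected.dist_triangle (u := r) (v := y) (w := x)
        exact (hmemS y).mpr ⟨hgA y hy, by omega⟩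
      have hScard : H + 1 ≤ S.card := by
        have hvS : v ∈ S := (hmemS v).mpr ⟨hv, by omega⟩
        obtain ⟨g, hgp, hgl, hgS⟩ := hkey v hvS
        have hnodup := hgp.support_nodup
        have hsub : g.support.toFinset ⊆ S := fun y hy => hgS y (List.mem_toFinset.mp hy)
        have hcard := Finset.card_le_card hsub
        rw [List.toFinset_card_of_nodup hnodup, Walk.length_support] at hcard
        omega
      have hSconn : (T.induce (S : Set V)).Connected := by
        apply connected_induce_of_center T _ u (Finset.mem_coe.mpr huS)
        intro x hx
        obtain ⟨g, _, _, hgS⟩ := hkey x (Finset.mem_coe.mp hx)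
        exact ⟨g, fun y hy => Finset.mem_coe.mpr (hgS y hy)⟩
      have hrS : r ∉ S := by
        intro hrS
        obtain ⟨_, hd⟩ := (hmemS r).mp hrS
        rw [SimpleGraph.dist_self] at hd
        omega
      set A' := A \ S with hA'def
      have hrA' : r ∈ A' := Finset.mem_sdiff.mpr ⟨hr, hrS⟩
      have hA'key : ∀ x ∈ A', ∃ g : T.Walk r x, ∀ y ∈ g.support, y ∈ A' := by
        intro x hx
        obtain ⟨hxA, hxS⟩ := Finset.mem_sdiff.mp hx
        obtain ⟨g, hgp, hgl, hgA⟩ := geo_in T hT hconn hr hxA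
        refine ⟨g, fun y hy => Finset.mem_sdiff.mpr ⟨hgA y hy, fun hyS => hxS ?_⟩⟩
        obtain ⟨hyA, hyd⟩ := (hmemS y).mp hyS
        have hsplit := dist_split T hT.isConnected g hgl hy
        have t1 := hT.isConnected.dist_triangle (u := u) (v := y) (w := x)
        have t2 := hT.isConnected.dist_triangle (u := r) (v := u) (w := x)
        exact (hmemS x).mpr ⟨hxA, by omega⟩
      have hA'conn : (T.induce (A' : Set V)).Connected := by
        apply connected_induce_of_center T _ r (Finset.mem_coe.mpr hrA')
        intro x hx
        obtain ⟨g, hgS⟩ := hA'key x (Finset.mem_coe.mp hx)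
        exact ⟨g, fun y hy => Finset.mem_coe.mpr (hgS y hy)⟩
      have hScardA : S.card ≤ A.card := Finset.card_le_card hSsub
      have hA'card : A'.card + S.card = A.card := by
        rw [hA'def, Finset.card_sdiff_of_subset hSsub]; omega
      have hA'n : A'.card ≤ n := by omega
      obtain ⟨P', hPsup, hPdisj, hPbot, hPcard, hPparts⟩ := IH A' hA'n ⟨r, hrA'⟩ hA'conn
      have hSP' : S ∉ P' := by
        intro hmem
        have hle : S ≤ P'.sup id := Finset.le_sup (f := id) hmem
        rw [hPsup] at hle
        exact (Finset.mem_sdiff.mp (hle huS)).2 huS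
      refine ⟨insert S P', ?_, ?_, ?_, ?_, ?_⟩
      · rw [Finset.sup_insert, hPsup, hA'def]
        show S ∪ A \ S = A
        exact Finset.union_sdiff_of_subset hSsub
      · rw [Finset.coe_insert]
        refine Set.PairwiseDisjoint.insert hPdisj ?_
        intro p hp _
        have hpsub : p ≤ P'.sup id := Finset.le_sup (f := id) (Finset.mem_coe.mp hp)
        rw [hPsup] at hpsub
        exact Finset.disjoint_left.mpr fun x hxS hxp => (Finset.mem_sdiff.mp (hpsub hxp)).2 hxS
      · intro hbot
        rcases Finset.mem_insert.mp hbot with hb | hb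
        · rw [← hb] at huS; simp at huS
        · exact hPbot hb
      · rw [Finset.card_insert_of_notMem hSP']
        have hP'ne : P'.Nonempty := by
          rcases Finset.eq_empty_or_nonempty P' with hemp | hne'
          · rw [hemp] at hPsup
            simp at hPsup
            rw [← hPsup] at hrA'
            simp at hrA'
          · exact hne'
        obtain ⟨t, ht⟩ : ∃ t, P'.card = t + 1 :=
          ⟨P'.card - 1, by have := Finset.card_pos.mpr hP'ne; omega⟩
        rw [ht] at hPcard ⊢
        simp only [Nat.add_sub_cancel] at hPcard ⊢
        calc (t + 1) * (H + 1) = t * (H + 1) + (H + 1) := by ring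
          _ < A'.card + S.card := by
              exact Nat.add_lt_add_of_lt_of_le hPcard hScard
          _ = A.card := hA'card
      · intro p hp
        rcases Finset.mem_insert.mp hp with rfl | hp'
        · exact ⟨hSconn, u, huS, hrad⟩
        · exact hPparts p hp'

lemma main_aux {V : Type} [Fintype V] [DecidableEq V] (T : SimpleGraph V) (hT : T.IsTree)
    (τ : ℕ) (hk : 2 ≤ Fintype.card V)
    (hτ : Fintype.card V ≤ τ * (Nat.log 2 (Fintype.card V)) ^ 2) :
    ∃ P : Finpartition (Finset.univ : Finset V),
      P.parts.card ≤ τ ∧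
      ∀ p ∈ P.parts, (T.induce (p : Set V)).Connected ∧
        ∃ r ∈ p, ∀ v ∈ p, T.dist r v ≤ 1 * (Nat.log 2 (Fintype.card V)) ^ 2 := by
  set L := Nat.log 2 (Fintype.card V) with hL
  haveI : Nonempty V := Fintype.card_pos_iff.mp (lt_of_lt_of_le (by norm_num) hk)
  have huniv : (Finset.univ : Finset V).Nonempty := Finset.univ_nonempty
  have hconn : (T.induce ((Finset.univ : Finset V) : Set V)).Connected := by
    apply connected_induce_of_center T _ (Classical.arbitrary V) (by simp)
    intro x _
    obtain ⟨w⟩ := hT.isConnected.preconnected (Classical.arbitrary V) x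
    exact ⟨w, fun y _ => by simp⟩
  obtain ⟨P, hPsup, hPdisj, hPbot, hPcard, hPparts⟩ :=
    decomp T hT (L ^ 2) (Fintype.card V) Finset.univ (le_of_eq Finset.card_univ) huniv hconn
  refine ⟨⟨P, Finset.supIndep_iff_pairwiseDisjoint.mpr hPdisj, hPsup, hPbot⟩, ?_, ?_⟩
  · by_contra hcon
    push_neg at hcon
    have hcon' : τ < P.card := hcon
    have h1 : τ ≤ P.card - 1 := by omega
    have h2 : τ * (L ^ 2 + 1) ≤ (P.card - 1) * (L ^ 2 + 1) := Nat.mul_le_mul_right _ h1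
    have h3 : (P.card - 1) * (L ^ 2 + 1) < (Finset.univ : Finset V).card := hPcard
    rw [Finset.card_univ] at h3
    have h5 : τ * L ^ 2 + τ < τ * L ^ 2 := by
      calc τ * L ^ 2 + τ = τ * (L ^ 2 + 1) := by ring
        _ ≤ (P.card - 1) * (L ^ 2 + 1) := h2
        _ < Fintype.card V := h3
        _ ≤ τ * L ^ 2 := hτ
    exact Nat.not_lt.mpr (Nat.le_add_right _ _) h5
  · intro p hp
    obtain ⟨hc, r, hrp, hbound⟩ := hPparts p hp
    exact ⟨hc, r, hrp, fun x hx => by simpa [one_mul] using hbound x hx⟩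

end StmtSixAux

/-- any tree on `k ≥ 2` nodes can be decomposed into at most `τ` connected
subtrees, each of height `O(log² k)`, whenever `τ·log₂² k ≥ k`. -/
theorem stmt6 :
    ∃ c : ℕ, 0 < c ∧ ∀ (V : Type) (_ : Fintype V) (_ : DecidableEq V)
      (T : SimpleGraph V), T.IsTree → ∀ τ : ℕ,
      2 ≤ Fintype.card V →
      Fintype.card V ≤ τ * (Nat.log 2 (Fintype.card V)) ^ 2 →
      ∃ P : Finpartition (Finset.univ : Finset V),
        P.parts.card ≤ τ ∧
        ∀ p ∈ P.parts, (T.induce (p : Set V)).Connected ∧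
          ∃ r ∈ p, ∀ v ∈ p, T.dist r v ≤ c * (Nat.log 2 (Fintype.card V)) ^ 2 := by
  refine ⟨1, Nat.one_pos, ?_⟩
  intro V fV dV T hT τ hk hτ
  exact @StmtSixAux.main_aux V fV dV T hT τ hk hτ
end

section
/- Let G = (V,E) be a connected graph partitioned into connected clusters of radius at most R, with quotient graph G_C. Assign each edge {C_i,C_j} of G_C weight equal to the length of the shortest path in G connecting C_i and C_j using only nodes of C_i ∪ C_j. Let Δ'_C be the weighted diameter of G_C. Then the diameter Δ of G satisfies Δ ≤ 2R + Δ'_C, and moreover 2R + Δ'_C ≤ 2R·(Δ_C + 1) + Δ_C where Δ_C is the unweighted diameter of G_C. -/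
/-- with the weighted quotient graph (edge weight = shortest connecting path
through the two clusters only) of weighted diameter `Δ'_C`, the diameter `Δ` of `G` satisfies
`Δ ≤ 2R + Δ'_C`, and moreover `2R + Δ'_C ≤ 2R·(Δ_C + 1) + Δ_C`. -/
theorem stmt9 {V ι : Type*} [Fintype V] [Fintype ι] [DecidableEq V] [DecidableEq ι]
    (G : SimpleGraph V) (hG : G.Connected)
    (cl : V → ι) (hsurj : Function.Surjective cl)
    (ctr : ι → V) (hctr : ∀ i, cl (ctr i) = i) (R : ℕ)
    -- `dC i v` : distance from the center of cluster `i` to `v` within cluster `i`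
    (dC : ι → V → ℕ)
    (hdC : ∀ i v, cl v = i → dC i v =
      sInf {m | ∃ p : G.Walk (ctr i) v, p.length = m ∧ ∀ x ∈ p.support, cl x = i})
    (hconnC : ∀ i v, cl v = i → ∃ p : G.Walk (ctr i) v, ∀ x ∈ p.support, cl x = i)
    -- each cluster has radius at most R around its center
    (hrad : ∀ v : V, dC (cl v) v ≤ R)
    (GC : SimpleGraph ι)
    (hGC : ∀ i j, GC.Adj i j ↔ i ≠ j ∧ ∃ u v, cl u = i ∧ cl v = j ∧ G.Adj u v)
    -- edge weights of the quotient graph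
    (w : ι → ι → ℕ)
    (hw : ∀ i j, GC.Adj i j → w i j =
      sInf {m | ∃ u v, cl u = i ∧ cl v = j ∧ G.Adj u v ∧ m = dC i u + 1 + dC j v})
    -- weighted shortest-path distance in the quotient graph
    (wdist : ι → ι → ℕ)
    (hwdist : ∀ i j, wdist i j =
      sInf {s | ∃ p : GC.Walk i j, s = (p.darts.map (fun d => w d.toProd.1 d.toProd.2)).sum})
    (Δ'C : ℕ) (hΔ'C : Δ'C = Finset.univ.sup (fun x : ι × ι => wdist x.1 x.2)) :
    G.diam ≤ 2 * R + Δ'C ∧ 2 * R + Δ'C ≤ 2 * R * (GC.diam + 1) + GC.diam := by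
  have hneV : Nonempty V := hG.nonempty
  have hneι : Nonempty ι := Nonempty.map cl hneV
  -- distance from center to vertex is at most dC
  have hdc : ∀ i v, cl v = i → G.dist (ctr i) v ≤ dC i v := by
    intro i v h
    obtain ⟨p, hp⟩ := hconnC i v h
    have hS : dC i v ∈ {m | ∃ p : G.Walk (ctr i) v,
        p.length = m ∧ ∀ x ∈ p.support, cl x = i} := by
      rw [hdC i v h]
      exact Nat.sInf_mem ⟨p.length, p, rfl, hp⟩
    obtain ⟨q, hq, -⟩ := hS
    exact hq ▸ SimpleGraph.dist_le q
  -- adjacency step in the quotient graph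
  have hstep : ∀ i j, GC.Adj i j → G.dist (ctr i) (ctr j) ≤ w i j := by
    intro i j hadj
    obtain ⟨hne', u₀, v₀, hu₀, hv₀, huv₀⟩ := (hGC i j).mp hadj
    have hS : w i j ∈ {m | ∃ u v, cl u = i ∧ cl v = j ∧ G.Adj u v ∧
        m = dC i u + 1 + dC j v} := by
      rw [hw i j hadj]
      exact Nat.sInf_mem ⟨_, u₀, v₀, hu₀, hv₀, huv₀, rfl⟩
    obtain ⟨u, v, hu, hv, huv, heq⟩ := hS
    have h1 : G.dist (ctr i) u ≤ dC i u := hdc i u hu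
    have h2 : G.dist (ctr j) v ≤ dC j v := hdc j v hv
    have h3 : G.dist u v ≤ 1 := by
      have := SimpleGraph.dist_le huv.toWalk
      simpa using this
    calc G.dist (ctr i) (ctr j)
        ≤ G.dist (ctr i) u + G.dist u (ctr j) := hG.dist_triangle
      _ ≤ G.dist (ctr i) u + (G.dist u v + G.dist v (ctr j)) := by
          have := hG.dist_triangle (u := u) (v := v) (w := ctr j)
          omega
      _ ≤ dC i u + (1 + dC j v) := by
          have h2' : G.dist v (ctr j) ≤ dC j v := by rw [SimpleGraph.dist_comm]; exact h2
          omega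
      _ = w i j := by omega
  -- distance between centers bounded by weighted walk sum
  have hwalk : ∀ (i j : ι) (p : GC.Walk i j),
      G.dist (ctr i) (ctr j) ≤ (p.darts.map (fun d => w d.toProd.1 d.toProd.2)).sum := by
    intro i j p
    induction p with
    | nil => simp
    | @cons a b c h p ih =>
      simp only [SimpleGraph.Walk.darts_cons, List.map_cons, List.sum_cons]
      have h1 := hstep a b h
      have := hG.dist_triangle (u := ctr a) (v := ctr b) (w := ctr c)
      omega
  -- the quotient graph is connected
  have hreach : ∀ (u v : V) (p : G.Walk u v), GC.Reachable (cl u) (cl v) := by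
    intro u v p
    induction p with
    | nil => exact SimpleGraph.Reachable.refl _
    | @cons a b c h p ih =>
      refine SimpleGraph.Reachable.trans ?_ ih
      by_cases hc : cl a = cl b
      · rw [hc]
      · exact ((hGC _ _).mpr ⟨hc, a, b, rfl, rfl, h⟩).reachable
  have hreachC : ∀ i j, GC.Reachable i j := by
    intro i j
    have := hreach (ctr i) (ctr j) (hG.preconnected (ctr i) (ctr j)).some
    rwa [hctr, hctr] at this
  -- distance between centers bounded by weighted quotient distance
  have hctrw : ∀ i j, G.dist (ctr i) (ctr j) ≤ wdist i j := by
    intro i j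
    have hS : wdist i j ∈ {s | ∃ p : GC.Walk i j,
        s = (p.darts.map (fun d => w d.toProd.1 d.toProd.2)).sum} := by
      rw [hwdist]
      exact Nat.sInf_mem ⟨_, (hreachC i j).some, rfl⟩
    obtain ⟨p, hp⟩ := hS
    exact hp ▸ hwalk i j p
  -- main distance bound
  have hmain : ∀ u v : V, G.dist u v ≤ 2 * R + Δ'C := by
    intro u v
    have h1 : G.dist (ctr (cl u)) u ≤ R := le_trans (hdc _ u rfl) (hrad u)
    have h2 : G.dist (ctr (cl v)) v ≤ R := le_trans (hdc _ v rfl) (hrad v)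
    have h3 : wdist (cl u) (cl v) ≤ Δ'C := by
      rw [hΔ'C]
      exact Finset.le_sup (f := fun x : ι × ι => wdist x.1 x.2)
        (Finset.mem_univ (cl u, cl v))
    have h4 := hctrw (cl u) (cl v)
    have t1 := hG.dist_triangle (u := u) (v := ctr (cl u)) (w := v)
    have t2 := hG.dist_triangle (u := ctr (cl u)) (v := ctr (cl v)) (w := v)
    have h1' : G.dist u (ctr (cl u)) ≤ R := by rw [SimpleGraph.dist_comm]; exact h1
    omega
  constructor
  · obtain ⟨u, v, huv⟩ := G.exists_dist_eq_diam
    rw [← huv]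
    exact hmain u v
  · -- second part
    have hGCet : GC.ediam ≠ ⊤ := by
      obtain ⟨u, v, huv⟩ := GC.exists_edist_eq_ediam_of_finite
      rw [← huv]
      exact SimpleGraph.edist_ne_top_iff_reachable.mpr (hreachC u v)
    have hwb : ∀ i j, GC.Adj i j → w i j ≤ 2 * R + 1 := by
      intro i j hadj
      obtain ⟨hne', u, v, hu, hv, huv⟩ := (hGC i j).mp hadj
      rw [hw i j hadj]
      refine le_trans (Nat.sInf_le ⟨u, v, hu, hv, huv, rfl⟩) ?_
      have h1 := hrad u
      have h2 := hrad v
      rw [hu] at h1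
      rw [hv] at h2
      omega
    have hwd : ∀ i j, wdist i j ≤ (2 * R + 1) * GC.diam := by
      intro i j
      obtain ⟨p, hp⟩ := (hreachC i j).exists_walk_length_eq_dist
      have hlen : p.length ≤ GC.diam := hp ▸ GC.dist_le_diam hGCet
      have hsum : (p.darts.map (fun d => w d.toProd.1 d.toProd.2)).sum ≤
          (2 * R + 1) * GC.diam := by
        calc (p.darts.map (fun d => w d.toProd.1 d.toProd.2)).sum
            ≤ (p.darts.map (fun d => w d.toProd.1 d.toProd.2)).length • (2 * R + 1) := by
              refine List.sum_le_card_nsmul _ _ ?_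
              intro x hx
              obtain ⟨d, hd, rfl⟩ := List.mem_map.mp hx
              exact hwb _ _ d.adj
          _ = p.length * (2 * R + 1) := by
              rw [List.length_map, SimpleGraph.Walk.length_darts, smul_eq_mul]
          _ ≤ GC.diam * (2 * R + 1) := Nat.mul_le_mul_right _ hlen
          _ = (2 * R + 1) * GC.diam := Nat.mul_comm _ _
      have : wdist i j ≤ (p.darts.map (fun d => w d.toProd.1 d.toProd.2)).sum := by
        rw [hwdist]
        exact Nat.sInf_le ⟨p, rfl⟩
      omega
    have hD : Δ'C ≤ (2 * R + 1) * GC.diam := by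
      rw [hΔ'C]
      exact Finset.sup_le fun x _ => hwd x.1 x.2
    have : 2 * R * (GC.diam + 1) + GC.diam = 2 * R + (2 * R + 1) * GC.diam := by ring
    omega
end

section
/- Let G = (V,E) be a connected graph and let M* ⊆ V with |M*| = k be an optimal solution to the k-center problem, achieving radius R_OPT(k) = max_{v∈V} dist(v, M*). Let τ ≤ k and suppose the quotient graph of the associated optimal clustering has a spanning tree decomposable into τ subtrees of height at most h each. Then there exists a set M' ⊆ V with |M'| = τ such that max_{v∈V} dist(v, M') ≤ (2h+1)·(2·R_OPT(k) + 1); in particular R_OPT(τ) = O(R_OPT(k)·h). -/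
/-- Along a walk in the quotient graph, actual distances in `G` grow by at most `2R+1`
per step. -/
lemma stmt12_aux {V : Type*} (G : SimpleGraph V) (hG : G.Connected)
    (R : ℕ) (cl : V → V) (hcldist : ∀ v, G.dist v (cl v) ≤ R)
    (GC : SimpleGraph V)
    (hGC : ∀ x y, GC.Adj x y ↔ x ≠ y ∧ ∃ u v, cl u = x ∧ cl v = y ∧ G.Adj u v) :
    ∀ {a b : V} (p : GC.Walk a b), G.dist a b ≤ p.length * (2 * R + 1) := by
  intro a b p
  induction p with
  | nil => simp
  | @cons x y z hadj q ih =>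
    obtain ⟨-, u, v, hux, hvy, huv⟩ := (hGC x y).1 hadj
    have h1 : G.dist x y ≤ 2 * R + 1 := by
      calc G.dist x y ≤ G.dist x u + G.dist u y := hG.dist_triangle
        _ ≤ G.dist x u + (G.dist u v + G.dist v y) := by
              exact Nat.add_le_add_left hG.dist_triangle _
        _ ≤ R + (1 + R) := by
              have hxu : G.dist x u ≤ R := by
                rw [SimpleGraph.dist_comm, ← hux]; exact hcldist u
              have huv1 : G.dist u v ≤ 1 := SimpleGraph.dist_le huv.toWalk
              have hvy1 : G.dist v y ≤ R := by rw [← hvy]; exact hcldist v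
              omega
        _ ≤ 2 * R + 1 := by omega
    calc G.dist x z ≤ G.dist x y + G.dist y z := hG.dist_triangle
      _ ≤ (2 * R + 1) + q.length * (2 * R + 1) := Nat.add_le_add h1 ih
      _ = (q.length + 1) * (2 * R + 1) := by ring
      _ = (SimpleGraph.Walk.cons hadj q).length * (2 * R + 1) := by
            rw [SimpleGraph.Walk.length_cons]

/-- from an optimal `k`-center solution of radius `R = R_OPT(k)` whose quotient
graph admits a decomposition into at most `τ` groups of clusters, each within (tree-)distance
`2h` of a chosen root cluster, one obtains a `τ`-center solution of radius at most
`(2h+1)·(2R+1)`. -/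
theorem stmt12 {V : Type*} [Fintype V] [DecidableEq V] (G : SimpleGraph V)
    (hG : G.Connected) (Mstar : Finset V) (k : ℕ) (hk : Mstar.card = k)
    (R : ℕ) (hcov : ∀ v : V, ∃ m ∈ Mstar, G.dist v m ≤ R)
    -- assignment of each node to (the center of) its cluster in the optimal clustering
    (cl : V → V) (hclmem : ∀ v, cl v ∈ Mstar) (hcldist : ∀ v, G.dist v (cl v) ≤ R)
    (hclid : ∀ m ∈ Mstar, cl m = m)
    -- quotient graph on the centers
    (GC : SimpleGraph V)
    (hGC : ∀ x y, GC.Adj x y ↔ x ≠ y ∧ ∃ u v, cl u = x ∧ cl v = y ∧ G.Adj u v)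
    (τ h : ℕ) (hτ : 1 ≤ τ) (hτk : τ ≤ k)
    -- decomposition of the centers into ≤ τ groups, each with a root within distance 2h
    (parts : Finset (Finset V)) (hcardp : parts.card ≤ τ)
    (hpcover : ∀ m ∈ Mstar, ∃ p ∈ parts, m ∈ p)
    (hpsub : ∀ p ∈ parts, p ⊆ Mstar)
    (hroot : ∀ p ∈ parts, ∃ r ∈ p, ∀ m ∈ p, GC.Reachable r m ∧ GC.dist r m ≤ 2 * h) :
    ∃ M' : Finset V, M'.card = τ ∧
      ∀ v : V, ∃ m ∈ M', G.dist v m ≤ (2 * h + 1) * (2 * R + 1) := by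
  classical
  -- pick one root per part
  set M₀ : Finset V := parts.attach.image (fun p => (hroot p.1 p.2).choose) with hM₀
  have hM₀card : M₀.card ≤ τ := by
    calc M₀.card ≤ parts.attach.card := Finset.card_image_le
      _ = parts.card := Finset.card_attach
      _ ≤ τ := hcardp
  have hτV : τ ≤ Fintype.card V := by
    calc τ ≤ k := hτk
      _ = Mstar.card := hk.symm
      _ ≤ Fintype.card V := Finset.card_le_univ _
  obtain ⟨M', hsub, hcard⟩ := Finset.exists_superset_card_eq hM₀card hτV
  refine ⟨M', hcard, fun v => ?_⟩
  obtain ⟨p, hp, hclp⟩ := hpcover (cl v) (hclmem v)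
  set r := (hroot p hp).choose with hr
  obtain ⟨hrp, hrall⟩ := (hroot p hp).choose_spec
  have hrM : r ∈ M' := hsub (Finset.mem_image.2 ⟨⟨p, hp⟩, Finset.mem_attach _ _, rfl⟩)
  refine ⟨r, hrM, ?_⟩
  obtain ⟨hreach, hdistGC⟩ := hrall (cl v) hclp
  -- a GC-walk from r to cl v of length = GC.dist r (cl v)
  obtain ⟨w, hw⟩ := hreach.exists_walk_length_eq_dist
  have hGdist : G.dist r (cl v) ≤ 2 * h * (2 * R + 1) := by
    calc G.dist r (cl v) ≤ w.length * (2 * R + 1) :=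
          stmt12_aux G hG R cl hcldist GC hGC w
      _ = GC.dist r (cl v) * (2 * R + 1) := by rw [hw]
      _ ≤ 2 * h * (2 * R + 1) := Nat.mul_le_mul_right _ hdistGC
  calc G.dist v r ≤ G.dist v (cl v) + G.dist (cl v) r := hG.dist_triangle
    _ ≤ R + 2 * h * (2 * R + 1) := by
        have := hcldist v
        rw [SimpleGraph.dist_comm] at hGdist
        omega
    _ ≤ (2 * h + 1) * (2 * R + 1) := by ring_nf; omega
end

section
/- Let G be a connected graph with doubling dimension b and diameter Δ, and let k ≥ 1. Then the optimal k-center radius satisfies R_OPT(k) = O(⌈Δ / k^(1/b)⌉); i.e., there is a set of k centers such that every node is within distance c·⌈Δ/k^(1/b)⌉ of some center, for an absolute constant c. -/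
/-- Halving sequence: start at `Δ`, repeatedly take ceiling of half. -/
def halveSeq (Δ : ℕ) : ℕ → ℕ
  | 0 => Δ
  | i + 1 => (halveSeq Δ i + 1) / 2

lemma halveSeq_le (Δ i : ℕ) : halveSeq Δ i ≤ Δ := by
  induction i with
  | zero => simp [halveSeq]
  | succ i ih => simp only [halveSeq]; omega

lemma halveSeq_le_div_add_one (Δ i : ℕ) : halveSeq Δ i ≤ Δ / 2 ^ i + 1 := by
  induction i with
  | zero => simp [halveSeq]
  | succ i ih =>
    have h1 : Δ / 2 ^ i / 2 = Δ / 2 ^ (i + 1) := by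
      rw [Nat.div_div_eq_div_mul, pow_succ]
    simp only [halveSeq]
    omega

/-- for a connected graph of doubling dimension `b` and diameter `Δ`, there is a
set of `k` centers covering every node within distance `c·⌈Δ/k^(1/b)⌉`, for an absolute
constant `c`; i.e. `R_OPT(k) = O(⌈Δ/k^(1/b)⌉)`. -/
theorem stmt14 :
    ∃ c : ℕ, 0 < c ∧ ∀ (V : Type) (_ : Fintype V) (G : SimpleGraph V)
      (b k Δ : ℕ), G.Connected → 0 < b → 1 ≤ k → k ≤ Fintype.card V →
      (IsGreatest {d : ℕ | ∃ u v : V, G.dist u v = d} Δ) →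
      (∀ (R : ℕ), 0 < R → ∀ v : V, ∃ S : Finset V, S.card ≤ 2 ^ b ∧
        ∀ u : V, G.dist v u ≤ 2 * R → ∃ s ∈ S, G.dist s u ≤ R) →
      ∃ M : Finset V, M.card = k ∧
        ∀ v : V, ∃ m ∈ M, G.dist v m ≤ c * ⌈(Δ : ℝ) / (k : ℝ) ^ ((1 : ℝ) / b)⌉₊ := by
  refine ⟨3, by norm_num, ?_⟩
  classical
  intro V _ G b k Δ hconn hb hk hkcard hΔ hdbl
  have hVpos : 0 < Fintype.card V := lt_of_lt_of_le hk hkcard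
  obtain ⟨v₀⟩ := Fintype.card_pos_iff.mp hVpos
  set L := Nat.log 2 k with hL
  set t := L / b with ht
  -- key covering induction
  have key : ∀ i, ∃ S : Finset V, S.card ≤ 2 ^ (b * i) ∧
      ∀ u : V, ∃ s ∈ S, G.dist s u ≤ halveSeq Δ i := by
    intro i
    induction i with
    | zero =>
      exact ⟨{v₀}, by simp, fun u => ⟨v₀, Finset.mem_singleton_self _, hΔ.2 ⟨v₀, u, rfl⟩⟩⟩
    | succ i ih =>
      obtain ⟨S, hcard, hcov⟩ := ih
      by_cases h0 : halveSeq Δ i = 0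
      · refine ⟨S, le_trans hcard (Nat.pow_le_pow_right (by norm_num) (by nlinarith)), ?_⟩
        intro u
        obtain ⟨s, hs, hd⟩ := hcov u
        refine ⟨s, hs, ?_⟩
        have h1 : halveSeq Δ (i + 1) = 0 := by simp [halveSeq, h0]
        rw [h1]
        omega
      · set R := (halveSeq Δ i + 1) / 2 with hR
        have hRpos : 0 < R := by omega
        have h2R : halveSeq Δ i ≤ 2 * R := by omega
        choose T hTcard hTcov using hdbl R hRpos
        refine ⟨S.biUnion T, ?_, ?_⟩
        · calc (S.biUnion T).card ≤ ∑ s ∈ S, (T s).card := Finset.card_biUnion_le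
            _ ≤ S.card * 2 ^ b := Finset.sum_le_card_nsmul S _ _ (fun s _ => hTcard s)
            _ ≤ 2 ^ (b * i) * 2 ^ b := Nat.mul_le_mul_right _ hcard
            _ = 2 ^ (b * (i + 1)) := by rw [← pow_add]; ring_nf
        · intro u
          obtain ⟨s, hs, hd⟩ := hcov u
          obtain ⟨x, hx, hdx⟩ := hTcov s u (le_trans hd h2R)
          exact ⟨x, Finset.mem_biUnion.mpr ⟨s, hs, hx⟩, hdx⟩
  -- choice of t
  have htk : 2 ^ (b * t) ≤ k := by
    have h1 : b * t ≤ L := by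
      rw [ht, mul_comm]; exact Nat.div_mul_le_self L b
    calc 2 ^ (b * t) ≤ 2 ^ L := Nat.pow_le_pow_right (by norm_num) h1
      _ ≤ k := Nat.pow_log_le_self 2 (by omega)
  have hk2 : k < 2 ^ (b * (t + 1)) := by
    have h1 : L + 1 ≤ b * (t + 1) := by
      have hdm : b * t + L % b = L := by rw [ht]; exact Nat.div_add_mod L b
      have hmod := Nat.mod_lt L hb
      have : b * (t + 1) = b * t + b := by ring
      omega
    calc k < 2 ^ (L + 1) := Nat.lt_pow_succ_log_self (by norm_num) k
      _ ≤ 2 ^ (b * (t + 1)) := Nat.pow_le_pow_right (by norm_num) h1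
  obtain ⟨S, hScard, hScov⟩ := key t
  obtain ⟨M, hSM, hMcard⟩ := Finset.exists_superset_card_eq (le_trans hScard htk) hkcard
  refine ⟨M, hMcard, fun v => ?_⟩
  obtain ⟨s, hs, hd⟩ := hScov v
  refine ⟨s, hSM hs, ?_⟩
  rw [G.dist_comm]
  refine le_trans hd ?_
  -- final numeric bound : halveSeq Δ t ≤ 3 * ⌈Δ / k^(1/b)⌉₊
  by_cases hΔ0 : Δ = 0
  · subst hΔ0
    have := halveSeq_le 0 t
    omega
  · have hΔ1 : (0 : ℝ) < (Δ : ℝ) := by positivity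
    set N := ⌈(Δ : ℝ) / (k : ℝ) ^ ((1 : ℝ) / b)⌉₊ with hN
    have hkpos : (0 : ℝ) < (k : ℝ) := by exact_mod_cast hk
    have hrpos : (0 : ℝ) < (k : ℝ) ^ ((1 : ℝ) / b) := Real.rpow_pos_of_pos hkpos _
    have hNpos : 1 ≤ N := Nat.ceil_pos.mpr (div_pos hΔ1 hrpos)
    -- k^(1/b) < 2^(t+1)
    have hkr : (k : ℝ) ^ ((1 : ℝ) / b) < 2 ^ (t + 1) := by
      have hk' : (k : ℝ) < (2 : ℝ) ^ (b * (t + 1)) := by exact_mod_cast hk2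
      have h1 : (k : ℝ) ^ ((1 : ℝ) / b) < ((2 : ℝ) ^ (b * (t + 1))) ^ ((1 : ℝ) / b) :=
        Real.rpow_lt_rpow (by positivity) hk' (by positivity)
      have h2 : ((2 : ℝ) ^ (b * (t + 1))) ^ ((1 : ℝ) / b) = 2 ^ (t + 1) := by
        rw [← Real.rpow_natCast 2 (b * (t + 1)), ← Real.rpow_mul (by norm_num),
          show ((b * (t + 1) : ℕ) : ℝ) * ((1 : ℝ) / b) = ((t + 1 : ℕ) : ℝ) by
            push_cast
            field_simp,
          Real.rpow_natCast]
      rw [h2] at h1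
      exact h1
    -- nat div bound
    have h2t : (0 : ℝ) < (2 : ℝ) ^ (t + 1) := by positivity
    have hdiv : ((Δ / 2 ^ t : ℕ) : ℝ) < 2 * N := by
      have c1 : ((Δ / 2 ^ t : ℕ) : ℝ) ≤ (Δ : ℝ) / (2 : ℝ) ^ t := by
        rw [le_div_iff₀ (by positivity)]
        exact_mod_cast Nat.div_mul_le_self Δ (2 ^ t)
      have c2 : (Δ : ℝ) / (2 : ℝ) ^ t = 2 * ((Δ : ℝ) / (2 : ℝ) ^ (t + 1)) := by
        field_simp
        ring
      have c3 : (Δ : ℝ) / (2 : ℝ) ^ (t + 1) < (Δ : ℝ) / (k : ℝ) ^ ((1 : ℝ) / b) :=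
        div_lt_div_of_pos_left hΔ1 hrpos hkr
      have c4 : (Δ : ℝ) / (k : ℝ) ^ ((1 : ℝ) / b) ≤ N := Nat.le_ceil _
      calc ((Δ / 2 ^ t : ℕ) : ℝ) ≤ (Δ : ℝ) / (2 : ℝ) ^ t := c1
        _ = 2 * ((Δ : ℝ) / (2 : ℝ) ^ (t + 1)) := c2
        _ < 2 * ((Δ : ℝ) / (k : ℝ) ^ ((1 : ℝ) / b)) := by linarith
        _ ≤ 2 * N := by linarith
    have hdivn : Δ / 2 ^ t < 2 * N := by exact_mod_cast hdiv
    have := halveSeq_le_div_add_one Δ t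
    omega
end

section
/- Let G = (V,E) be a connected graph partitioned into connected clusters of radius at most ρ each, and let π be a shortest path in G between two nodes. Suppose every segment of π of length R intersects at most Q clusters. Then the distance in the quotient graph G_C between the clusters containing the endpoints of π is at most Q·⌈(|π|+1)/R⌉ − 1. -/

lemma aux_walk {V ι : Type*} (G : SimpleGraph V) (GC : SimpleGraph ι) (cl : V → ι)
    (h : ∀ a b : V, G.Adj a b → cl a = cl b ∨ GC.Adj (cl a) (cl b))
    {u v : V} (p : G.Walk u v) :
    ∃ w : GC.Walk (cl u) (cl v), ∀ x ∈ w.support, x ∈ p.support.map cl := by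
  induction p with
  | nil => exact ⟨.nil, by simp⟩
  | cons hadj q ih =>
    obtain ⟨w, hw⟩ := ih
    rcases h _ _ hadj with he | ha
    · refine ⟨w.copy he.symm rfl, ?_⟩
      intro x hx
      rw [SimpleGraph.Walk.support_copy] at hx
      simpa using Or.inr (by simpa using hw x hx)
    · refine ⟨.cons ha w, ?_⟩
      intro x hx
      rw [SimpleGraph.Walk.support_cons] at hx
      rcases List.mem_cons.1 hx with hx | hx
      · simp [hx]
      · simpa using Or.inr (by simpa using hw x hx)

/-- if every length-`R` segment of a shortest path `π` meets at most `Q`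
clusters, then the quotient-graph distance between the clusters of the endpoints of `π` is at
most `Q·⌈(|π|+1)/R⌉ − 1`. -/
theorem stmt16 {V ι : Type*} [Fintype V] [Fintype ι] [DecidableEq V] [DecidableEq ι]
    (G : SimpleGraph V) (hG : G.Connected) (cl : V → ι)
    (hconn : ∀ i, (G.induce {v | cl v = i}).Connected)
    (GC : SimpleGraph ι)
    (hGC : ∀ i j, GC.Adj i j ↔ i ≠ j ∧ ∃ u v, cl u = i ∧ cl v = j ∧ G.Adj u v)
    (u v : V) (p : G.Walk u v) (hpath : p.IsPath) (hshort : p.length = G.dist u v)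
    (R Q : ℕ) (hR : 1 ≤ R)
    (hQ : ∀ t : ℕ, (((p.support.drop (t * R)).take R).toFinset.image cl).card ≤ Q) :
    GC.dist (cl u) (cl v) ≤ Q * ((p.length + R) / R) - 1 := by
  set S : Finset ι := p.support.toFinset.image cl with hS
  -- step 1: dist + 1 ≤ S.card
  have hadj : ∀ a b : V, G.Adj a b → cl a = cl b ∨ GC.Adj (cl a) (cl b) := by
    intro a b hab
    by_cases h : cl a = cl b
    · exact Or.inl h
    · exact Or.inr ((hGC _ _).2 ⟨h, a, b, rfl, rfl, hab⟩)
  obtain ⟨w, hw⟩ := aux_walk G GC cl hadj p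
  have hb : GC.dist (cl u) (cl v) + 1 ≤ S.card := by
    have h1 : GC.dist (cl u) (cl v) ≤ w.bypass.length := SimpleGraph.dist_le _
    have hnodup : w.bypass.support.Nodup := w.bypass_isPath.support_nodup
    have hsub : w.bypass.support.toFinset ⊆ S := by
      intro x hx
      simp only [List.mem_toFinset] at hx
      have := hw x (w.support_bypass_subset hx)
      simp only [List.mem_map] at this
      obtain ⟨a, ha, rfl⟩ := this
      exact Finset.mem_image.2 ⟨a, List.mem_toFinset.2 ha, rfl⟩
    have h2 : w.bypass.support.length ≤ S.card := by
      calc w.bypass.support.length = w.bypass.support.toFinset.card :=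
            (List.toFinset_card_of_nodup hnodup).symm
        _ ≤ S.card := Finset.card_le_card hsub
    have := w.bypass.length_support
    omega
  -- step 2: S.card ≤ Q * B
  set B := (p.length + R) / R with hB
  have hBval : B = p.length / R + 1 := by
    rw [hB, Nat.add_div_right _ (by omega : 0 < R)]
  have hcover : S ⊆ (Finset.range B).biUnion
      (fun t => ((p.support.drop (t * R)).take R).toFinset.image cl) := by
    intro x hx
    obtain ⟨a, ha, rfl⟩ := Finset.mem_image.1 hx
    rw [List.mem_toFinset] at ha
    obtain ⟨i, hi, rfl⟩ := List.getElem_of_mem ha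
    set t := i / R with ht
    have htB : t < B := by
      rw [hBval, ht]
      have hle : i ≤ p.length := by
        have := p.length_support; omega
      have := Nat.div_le_div_right (c := R) hle
      omega
    refine Finset.mem_biUnion.2 ⟨t, Finset.mem_range.2 htB, ?_⟩
    refine Finset.mem_image.2 ⟨p.support[i], ?_, rfl⟩
    rw [List.mem_toFinset]
    have hmod : i % R < R := Nat.mod_lt _ (by omega)
    have hidx : t * R + i % R = i := by
      have := Nat.div_add_mod i R
      rw [ht, Nat.mul_comm]; omega
    have hlen : t * R < p.support.length := by omega
    have h1 : i % R < (p.support.drop (t * R)).length := by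
      rw [List.length_drop]; omega
    have h2 : i % R < ((p.support.drop (t * R)).take R).length := by
      rw [List.length_take]; omega
    have : ((p.support.drop (t * R)).take R)[i % R] = p.support[i] := by
      rw [List.getElem_take, List.getElem_drop]
      congr 1
    rw [← this]
    exact List.getElem_mem _
  have hcard : S.card ≤ Q * B := by
    calc S.card ≤ ((Finset.range B).biUnion
          (fun t => ((p.support.drop (t * R)).take R).toFinset.image cl)).card :=
          Finset.card_le_card hcover
      _ ≤ ∑ t ∈ Finset.range B, (((p.support.drop (t * R)).take R).toFinset.image cl).card :=
          Finset.card_biUnion_le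
      _ ≤ ∑ _t ∈ Finset.range B, Q := Finset.sum_le_sum (fun t _ => hQ t)
      _ = Q * B := by simp [mul_comm]
  omega
end
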